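/- Let n ≥ 1 and let π : Fin n → Fin n be an involution (π ∘ π = id), encoding a layer of controlled-Z gates on the disjoint pairs {i, π(i)} with π(i) ≠ i. Let CZ_π be the diagonal 2^n × 2^n matrix with entry (−1)^{∑_{i : i < π(i)} x(i)·x(π(i))} at basis index x : Fin n → Fin 2. Then for all bit strings α, α' : Fin n → Fin 2 there exist β : Fin n → Fin 2 and a sign ω ∈ {1, −1} such that CZ_π · (⊗_{i} X^{α'(i)} Z^{α(i)}) = ω • (⊗_{i} X^{α'(i)} Z^{α(i) + β(i) mod 2}) · CZ_π, where β(i) = α'(π(i)) if π(i) ≠ i and β(i) = 0 if π(i) = i. (The propagation rule, generalizing the identities (X⊗I)cZ = cZ(X⊗Z) and (Z⊗I)cZ = cZ(Z⊗I), by which the quantum one-time pad is pushed through a band of cZ gates.) -/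

import Mathlib

open Matrix

/-- The Pauli matrix `X`. -/
noncomputable def Xm : Matrix (Fin 2) (Fin 2) ℂ := !![0, 1; 1, 0]

/-- The Pauli matrix `Z`. -/
noncomputable def Zm : Matrix (Fin 2) (Fin 2) ℂ := !![1, 0; 0, -1]

/-- The quantum one-time pad layer `⊗ᵢ X^{α'(i)} Z^{α(i)}`. -/
noncomputable def XZstring (n : ℕ) (α' α : Fin n → Fin 2) :
    Matrix (Fin n → Fin 2) (Fin n → Fin 2) ℂ :=
  Matrix.of fun x y => ∏ i, (Xm ^ (α' i : ℕ) * Zm ^ (α i : ℕ)) (x i) (y i)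

/-- The band of controlled-Z gates determined by an involution `π`: the diagonal
matrix with entry `(−1)^{∑_{i < π i} x i · x (π i)}` at basis index `x`. -/
noncomputable def CZband (n : ℕ) (π : Fin n → Fin n) :
    Matrix (Fin n → Fin 2) (Fin n → Fin 2) ℂ :=
  Matrix.of fun x y =>
    if x = y then
      (-1 : ℂ) ^ (∑ i ∈ Finset.univ.filter fun i => i < π i, (x i : ℕ) * (x (π i) : ℕ))
    else 0

/-! Both sides are monomial matrices supported on `x = y + α'`, with entries `±1`. Writing
the signs additively in `Fin 2`, the band contributes the quadratic form
`q x = ∑_{i < π i} x i * x (π i)`, whose polarization `q (y + a) - q y - q a = ∑ i, β i * y i`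
is linear in `y`: it is absorbed as the extra `Z`-exponent `β`, and `q α'` is the global sign `ω`. -/

open Finset Fin.CommRing

theorem AddChar.map_sum_eq_prod {ι A M : Type*} [AddCommMonoid A] [CommMonoid M]
    (ψ : AddChar A M) (s : Finset ι) (f : ι → A) : ψ (∑ i ∈ s, f i) = ∏ i ∈ s, ψ (f i) := by
  induction s using Finset.cons_induction with
  | empty => simp
  | cons a s ha ih => rw [sum_cons, prod_cons, ψ.map_add_eq_mul, ih]

theorem Function.Involutive.sum_filter_lt_add {ι M : Type*} [Fintype ι] [LinearOrder ι]
    [AddCommMonoid M] {π : ι → ι} (hπ : Function.Involutive π) (g : ι → M) :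
    ∑ i ∈ univ.filter (fun i => i < π i), (g i + g (π i)) =
      ∑ i ∈ univ.filter (fun i => π i ≠ i), g i := by
  have hsplit : univ.filter (fun i => π i ≠ i) =
      univ.filter (fun i => i < π i) ∪ univ.filter (fun i => π i < i) := by
    ext i
    simp only [mem_filter, mem_univ, true_and, mem_union]
    exact ⟨fun h => (Ne.symm h).lt_or_gt, fun h => h.elim ne_of_gt ne_of_lt⟩
  have hdisj : Disjoint (univ.filter (fun i => i < π i)) (univ.filter (fun i => π i < i)) :=
    disjoint_filter.mpr fun i _ h => not_lt_of_gt h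
  rw [sum_add_distrib, hsplit, sum_union hdisj]
  congr 1
  refine sum_nbij' π π ?_ ?_ (fun i _ => hπ i) (fun i _ => hπ i) (fun _ _ => rfl) <;>
    intro i <;> simp [hπ i]

section CZPhase

variable {ι R : Type*} [Fintype ι] [LinearOrder ι] [CommRing R]

def czPhase (π : ι → ι) (x : ι → R) : R :=
  ∑ i ∈ univ.filter (fun i => i < π i), x i * x (π i)

theorem czPhase_add {π : ι → ι} (hπ : Function.Involutive π) (x a : ι → R) :
    czPhase π (x + a) =
      czPhase π x + czPhase π a + ∑ i, (if π i = i then 0 else a (π i)) * x i := by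
  have hcross : ∑ i ∈ univ.filter (fun i => i < π i), (x i * a (π i) + a i * x (π i)) =
      ∑ i, (if π i = i then 0 else a (π i)) * x i := by
    calc _ = ∑ i ∈ univ.filter (fun i => i < π i),
            (a (π i) * x i + a (π (π i)) * x (π i)) :=
          sum_congr rfl fun i _ => by rw [hπ i]; ring
      _ = ∑ i ∈ univ.filter (fun i => π i ≠ i), a (π i) * x i := hπ.sum_filter_lt_add _
      _ = _ := by
          rw [sum_filter]
          exact sum_congr rfl fun i _ => by split_ifs <;> simp_all
  simp only [czPhase, Pi.add_apply, ← hcross, ← sum_add_distrib]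
  exact sum_congr rfl fun i _ => by ring

end CZPhase

def negOnePowChar : AddChar (Fin 2) ℂ where
  toFun a := (-1) ^ (a : ℕ)
  map_zero_eq_one' := pow_zero _
  map_add_eq_mul' a b := by fin_cases a <;> fin_cases b <;> norm_num [Fin.val_add]

theorem negOnePowChar_eq_one_or_neg_one (a : Fin 2) :
    negOnePowChar a = 1 ∨ negOnePowChar a = -1 := by
  fin_cases a <;> simp [negOnePowChar]

theorem neg_one_pow_val_mul (a b : Fin 2) :
    (-1 : ℂ) ^ ((a : ℕ) * (b : ℕ)) = negOnePowChar (a * b) := by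
  fin_cases a <;> fin_cases b <;> simp [negOnePowChar]

theorem neg_one_pow_sum_val_mul {ι : Type*} (s : Finset ι) (f g : ι → Fin 2) :
    (-1 : ℂ) ^ (∑ i ∈ s, (f i : ℕ) * (g i : ℕ)) = negOnePowChar (∑ i ∈ s, f i * g i) := by
  rw [AddChar.map_sum_eq_prod, ← prod_pow_eq_pow_sum]
  exact prod_congr rfl fun i _ => neg_one_pow_val_mul _ _

theorem pauliXZ_apply (a b u v : Fin 2) :
    (Xm ^ (a : ℕ) * Zm ^ (b : ℕ)) u v = if u = v + a then negOnePowChar (b * v) else 0 := by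
  fin_cases a <;> fin_cases b <;> fin_cases u <;> fin_cases v <;>
    simp [Xm, Zm, negOnePowChar, Matrix.mul_apply, Fin.sum_univ_two]

theorem XZstring_apply (n : ℕ) (α' α x y : Fin n → Fin 2) :
    XZstring n α' α x y = if x = y + α' then negOnePowChar (∑ i, α i * y i) else 0 := by
  simp only [XZstring, of_apply, pauliXZ_apply]
  split_ifs with h
  · simp [h, AddChar.map_sum_eq_prod]
  · obtain ⟨i, hi⟩ := Function.ne_iff.mp h
    exact prod_eq_zero (mem_univ i) (if_neg hi)

theorem CZband_eq_diagonal (n : ℕ) (π : Fin n → Fin n) :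
    CZband n π = diagonal fun x => negOnePowChar (czPhase π x) := by
  ext x y
  simp only [CZband, czPhase, of_apply, diagonal_apply, neg_one_pow_sum_val_mul]

theorem qotp_through_cz_band (n : ℕ)
    (π : Fin n → Fin n) (hπ : Function.Involutive π)
    (α α' : Fin n → Fin 2) :
    ∃ ω : ℂ, (ω = 1 ∨ ω = -1) ∧
      CZband n π * XZstring n α' α =
        ω • (XZstring n α' (fun i => α i + if π i = i then 0 else α' (π i)) *
          CZband n π) := by
  refine ⟨negOnePowChar (czPhase π α'), negOnePowChar_eq_one_or_neg_one _, ?_⟩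
  ext x y
  rw [CZband_eq_diagonal, diagonal_mul, Matrix.smul_apply, mul_diagonal, XZstring_apply,
    XZstring_apply, smul_eq_mul]
  split_ifs with h
  · subst h
    simp only [← AddChar.map_add_eq_mul, czPhase_add hπ, add_mul, sum_add_distrib]
    congr 1
    ring
  · simp
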